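/- (Tensorization of rank-k matrix factorizations.) Let M = c • W with c ∈ ℂ, c ≠ 0 and W ∈ Matrix.unitaryGroup (Fin n) ℂ. Given G : Matrix (Fin m × Fin n) (Fin k) ℂ and H : Matrix (Fin k) (Fin ℓ) ℂ, define the m×ℓ×n tensor Z by (Z i) a j = (G * H) (a,i) j. Then there exist an m×k×n tensor X and a k×ℓ×n tensor Y such that Z = X ⋆_M Y. -/

import Mathlib

open scoped BigOperators ComplexConjugate Matrix

noncomputable section

variable {R : Type*}

/-- Mode-3 product of a third-order tensor (encoded by its frontal slices)
with a transform matrix: `(A ×₃ M) i = ∑ j, (M i j) • (A j)`. -/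
def mode3 [RCLike R] {ι α β : Type*} [Fintype ι]
    (A : ι → Matrix α β R) (M : Matrix ι ι R) : ι → Matrix α β R :=
  fun i => ∑ j, M i j • A j

/-- Frobenius (entrywise ℓ²) norm of a matrix. -/
def fnorm [RCLike R] {α β : Type*} [Fintype α] [Fintype β] (A : Matrix α β R) : ℝ :=
  Real.sqrt (∑ a, ∑ b, ‖A a b‖ ^ 2)

/-- Frobenius norm of a tensor: `‖A‖² = ∑ i, ‖A i‖²`. -/
def tnorm [RCLike R] {ι α β : Type*} [Fintype ι] [Fintype α] [Fintype β]
    (A : ι → Matrix α β R) : ℝ :=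
  Real.sqrt (∑ i, fnorm (A i) ^ 2)

/-- The ⋆_M product: facewise product in the transform domain, then inverse transform. -/
def tprodM [RCLike R] {ι m p q : Type*} [Fintype ι] [DecidableEq ι] [Fintype p]
    (M : Matrix ι ι R) (A : ι → Matrix m p R) (B : ι → Matrix p q R) :
    ι → Matrix m q R :=
  mode3 (fun i => mode3 A M i * mode3 B M i) M⁻¹

/-- Conjugate transpose of a tensor under ⋆_M. -/
def tconj [RCLike R] {ι m p : Type*} [Fintype ι] [DecidableEq ι]
    (M : Matrix ι ι R) (A : ι → Matrix m p R) : ι → Matrix p m R :=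
  mode3 (fun i => (mode3 A M i)ᴴ) M⁻¹

/-- The identity tensor under ⋆_M. -/
def tId [RCLike R] (m : Type*) [DecidableEq m] {ι : Type*} [Fintype ι] [DecidableEq ι]
    (M : Matrix ι ι R) : ι → Matrix m m R :=
  mode3 (fun _ => (1 : Matrix m m R)) M⁻¹

/-- A square tensor `Q` is ⋆_M-unitary if `Qᴴ ⋆_M Q = Q ⋆_M Qᴴ = I`. -/
def tUnitary [RCLike R] {ι m : Type*} [Fintype ι] [DecidableEq ι] [Fintype m] [DecidableEq m]
    (M : Matrix ι ι R) (Q : ι → Matrix m m R) : Prop :=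
  tprodM M (tconj M Q) Q = tId m M ∧ tprodM M Q (tconj M Q) = tId m M

/-- A t-SVDM of `A`: a factorization `A = U ⋆_M S ⋆_M Vᴴ` with `U`, `V` ⋆_M-unitary and every
transform-domain slice `Ŝ i` diagonal with real, nonnegative, nonincreasing diagonal entries. -/
def IsTSVDM [RCLike R] {m p n : ℕ} (M : Matrix (Fin n) (Fin n) R)
    (A : Fin n → Matrix (Fin m) (Fin p) R)
    (U : Fin n → Matrix (Fin m) (Fin m) R)
    (S : Fin n → Matrix (Fin m) (Fin p) R)
    (V : Fin n → Matrix (Fin p) (Fin p) R) : Prop :=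
  A = tprodM M (tprodM M U S) (tconj M V) ∧
  tUnitary M U ∧ tUnitary M V ∧
  (∀ (i : Fin n) (a : Fin m) (b : Fin p), (a : ℕ) ≠ (b : ℕ) → mode3 S M i a b = 0) ∧
  (∀ (i : Fin n) (a : Fin m) (b : Fin p), (a : ℕ) = (b : ℕ) →
      ∃ r : ℝ, 0 ≤ r ∧ mode3 S M i a b = (r : R)) ∧
  (∀ (i : Fin n) (a a' : Fin m) (b b' : Fin p), (a : ℕ) = (b : ℕ) → (a' : ℕ) = (b' : ℕ) →
      (a : ℕ) ≤ (a' : ℕ) →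
      RCLike.re (mode3 S M i a' b') ≤ RCLike.re (mode3 S M i a b))

/-- Transform-domain slice of a truncation:
(first k columns of Û) * (leading k×k block of Ŝ) * (first k columns of V̂)ᴴ. -/
def truncSlice [RCLike R] {m p : ℕ} (k : ℕ) (Uh : Matrix (Fin m) (Fin m) R)
    (Sh : Matrix (Fin m) (Fin p) R) (Vh : Matrix (Fin p) (Fin p) R) :
    Matrix (Fin m) (Fin p) R :=
  Matrix.of fun a b =>
    ∑ j : Fin m, ∑ l : Fin p,
      if (j : ℕ) < k ∧ (l : ℕ) < k then Uh a j * Sh j l * star (Vh b l) else 0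

/-- The multi-rank-ρ truncation of a t-SVDM (use `ρ = fun _ => k` for the t-rank-k truncation). -/
def truncTensor [RCLike R] {m p n : ℕ} (M : Matrix (Fin n) (Fin n) R)
    (U : Fin n → Matrix (Fin m) (Fin m) R) (S : Fin n → Matrix (Fin m) (Fin p) R)
    (V : Fin n → Matrix (Fin p) (Fin p) R) (ρ : Fin n → ℕ) :
    Fin n → Matrix (Fin m) (Fin p) R :=
  mode3 (fun i => truncSlice (ρ i) (mode3 U M i) (mode3 S M i) (mode3 V M i)) M⁻¹

/-- The permuted tensor `Aᴾ`: `(Aᴾ c) i j = (A i) c j`. -/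
def tperm [RCLike R] {m p n : ℕ} (A : Fin n → Matrix (Fin m) (Fin p) R) :
    Fin m → Matrix (Fin n) (Fin p) R :=
  fun c => Matrix.of fun i j => A i c j

/-!
Transform `Y := H ×₃ M⁻¹`, the constant tensor with slices `H`, so that `Ŷ i = H` for every `i`.
Since `×₃` acts on the tube index only, it commutes with right multiplication by a fixed matrix,
so `X̂ i * H = (X * H)^ i` and inverting the transform gives `X ⋆_M Y = X * H` slicewise.
Taking for `X` the slices `G (·, i)` of `G` yields the folding of `G * H`.
-/

section Mode3

variable [RCLike R] {ι α β γ : Type*} [Fintype ι]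

theorem mode3_mode3 (A : ι → Matrix α β R) (M N : Matrix ι ι R) :
    mode3 (mode3 A M) N = mode3 A (N * M) := by
  funext i
  simp only [mode3, Finset.smul_sum, smul_smul, Matrix.mul_apply, Finset.sum_smul]
  exact Finset.sum_comm

theorem mode3_one [DecidableEq ι] (A : ι → Matrix α β R) : mode3 A 1 = A := by
  funext i
  simp [mode3, Matrix.one_apply]

theorem mode3_mul_right [Fintype β] (A : ι → Matrix α β R) (M : Matrix ι ι R)
    (H : Matrix β γ R) : mode3 (fun i => A i * H) M = fun i => mode3 A M i * H := by
  funext i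
  simp only [mode3, Matrix.sum_mul, Matrix.smul_mul]

theorem tprodM_mode3_inv_const [DecidableEq ι] [Fintype β] {M : Matrix ι ι R}
    (hM : IsUnit M.det) (A : ι → Matrix α β R) (H : Matrix β γ R) :
    tprodM M A (mode3 (fun _ => H) M⁻¹) = fun i => A i * H := by
  rw [tprodM, mode3_mode3, Matrix.mul_nonsing_inv _ hM, mode3_one, mode3_mul_right,
    mode3_mode3, Matrix.nonsing_inv_mul _ hM, mode3_one]

end Mode3

theorem Matrix.isUnit_det_smul_of_mem_unitaryGroup {n 𝕜 : Type*} [Fintype n] [DecidableEq n]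
    [Field 𝕜] [StarRing 𝕜] {W : Matrix n n 𝕜} (hW : W ∈ Matrix.unitaryGroup n 𝕜) {c : 𝕜}
    (hc : c ≠ 0) : IsUnit (c • W).det := by
  rw [Matrix.det_smul]
  exact (hc.isUnit.pow _).mul (Matrix.UnitaryGroup.det_isUnit ⟨W, hW⟩)

/-- tensorization of rank-k matrix factorizations: the tensor folding of
`G * H` can be written as `X ⋆_M Y` with inner tensor dimension `k`. -/
theorem stmt9 {m n k ℓ : ℕ}
    (W : Matrix (Fin n) (Fin n) ℂ) (hW : W ∈ Matrix.unitaryGroup (Fin n) ℂ)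
    (c : ℂ) (hc : c ≠ 0)
    (G : Matrix (Fin m × Fin n) (Fin k) ℂ) (H : Matrix (Fin k) (Fin ℓ) ℂ) :
    ∃ (X : Fin n → Matrix (Fin m) (Fin k) ℂ) (Y : Fin n → Matrix (Fin k) (Fin ℓ) ℂ),
      (fun i => Matrix.of fun (a : Fin m) (j : Fin ℓ) => (G * H) (a, i) j) =
        tprodM (c • W) X Y := by
  refine ⟨fun i => Matrix.of fun a t => G (a, i) t, mode3 (fun _ => H) (c • W)⁻¹, ?_⟩
  rw [tprodM_mode3_inv_const (Matrix.isUnit_det_smul_of_mem_unitaryGroup hW hc)]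
  funext i
  ext a j
  simp [Matrix.mul_apply]
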